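/- arXiv:1811.07606 — 2 statements merged into one kernel-verified Lean document; each statement's English description precedes it below -/
import Mathlib

section
/- Let X be a topological space on which every Baire one function f : X → ℝ is bounded, and suppose there exists a non-constant continuous function f : X → ℝ. Then X is not connected. -/
/-! The reciprocal `(f - c)⁻¹` of a continuous function is Baire one, as the pointwise limit of
`(f - c) / ((f - c) ^ 2 + 1 / (n + 1))`. On a connected space it is unbounded once `f` is
non-constant: for `c = f a < f b` the intermediate value theorem makes `f - c` attain every value
in `(0, f b - f a]`. -/

/-- A function between topological spaces is *Baire one* if it is the pointwise
limit of a sequence of continuous functions. -/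
def IsBaireOne {X Y : Type*} [TopologicalSpace X] [TopologicalSpace Y] (f : X → Y) : Prop :=
  ∃ F : ℕ → X → Y, (∀ n, Continuous (F n)) ∧
    ∀ x, Filter.Tendsto (fun n => F n x) Filter.atTop (nhds (f x))

open Filter Topology

/-- At `y = 0` both sides are `0`, matching the junk value `0⁻¹ = 0`. -/
theorem tendsto_div_sq_add_inv_nat (y : ℝ) :
    Tendsto (fun n : ℕ => y / (y ^ 2 + 1 / (n + 1))) atTop (𝓝 y⁻¹) := by
  rcases eq_or_ne y 0 with rfl | hy
  · simp
  have hcont : ContinuousAt (fun t : ℝ => y / (y ^ 2 + t)) 0 :=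
    continuousAt_const.div (by fun_prop) (by simpa using pow_ne_zero 2 hy)
  have hvalue : y / (y ^ 2 + 0) = y⁻¹ := by
    rw [add_zero, div_eq_mul_inv, sq, mul_inv, ← mul_assoc, mul_inv_cancel₀ hy, one_mul]
  have hlim := hcont.tendsto.comp tendsto_one_div_add_atTop_nhds_zero_nat
  rwa [hvalue] at hlim

theorem Continuous.isBaireOne_inv {X : Type*} [TopologicalSpace X] {h : X → ℝ}
    (hh : Continuous h) : IsBaireOne fun x => (h x)⁻¹ := by
  refine ⟨fun n x => h x / (h x ^ 2 + 1 / (n + 1)), fun n => ?_,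
    fun x => tendsto_div_sq_add_inv_nat (h x)⟩
  exact hh.div (by fun_prop) fun x => by positivity

theorem exists_inv_sub_eq_of_lt {X : Type*} [TopologicalSpace X] [PreconnectedSpace X]
    {f : X → ℝ} (hf : Continuous f) {a b : X} (hab : f a < f b) {t : ℝ}
    (ht : (f b - f a)⁻¹ ≤ t) : ∃ x, (f x - f a)⁻¹ = t := by
  have htpos : 0 < t := (inv_pos.2 (sub_pos.2 hab)).trans_le ht
  have hmem : f a + t⁻¹ ∈ Set.Icc (f a) (f b) := by
    constructor
    · linarith [inv_pos.2 htpos]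
    · linarith [(inv_le_comm₀ (sub_pos.2 hab) htpos).1 ht]
  obtain ⟨x, hx⟩ := intermediate_value_univ a b hf hmem
  exact ⟨x, by rw [hx, add_sub_cancel_left, inv_inv]⟩

theorem not_connected_of_baireOne_bounded {X : Type*} [TopologicalSpace X]
    (hbd : ∀ f : X → ℝ, IsBaireOne f → ∃ M : ℝ, ∀ x, |f x| ≤ M)
    (f : X → ℝ) (hf : Continuous f) (hnc : ∃ x y : X, f x ≠ f y) :
    ¬ ConnectedSpace X := by
  intro _
  obtain ⟨a, b, hab⟩ := hnc
  wlog hlt : f a < f b generalizing a b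
  · exact this b a hab.symm (hab.symm.lt_of_le (not_lt.1 hlt))
  obtain ⟨M, hM⟩ := hbd _ (Continuous.isBaireOne_inv (h := fun x => f x - f a) (by fun_prop))
  obtain ⟨x, hx⟩ := exists_inv_sub_eq_of_lt hf hlt (t := max M (f b - f a)⁻¹ + 1) (by
    linarith [le_max_right M (f b - f a)⁻¹])
  have hxM := (le_abs_self _).trans (hM x)
  rw [hx] at hxM
  linarith [le_max_left M (f b - f a)⁻¹]
end

section
/- Let X be a topological space and Y ⊆ X a subset that is B₁-embedded in X. Then Y is B₁*-embedded in X. -/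
/-- `Y` is *B₁-embedded* in `X` if every Baire one function on the subspace `Y`
extends to a Baire one function on `X`. -/
def B1Embedded {X : Type*} [TopologicalSpace X] (Y : Set X) : Prop :=
  ∀ f : Y → ℝ, IsBaireOne f → ∃ g : X → ℝ, IsBaireOne g ∧ ∀ y : Y, g y = f y

/-- `Y` is *B₁*-embedded* in `X` if every bounded Baire one function on the subspace `Y`
extends to a bounded Baire one function on `X`. -/
def B1StarEmbedded {X : Type*} [TopologicalSpace X] (Y : Set X) : Prop :=
  ∀ f : Y → ℝ, IsBaireOne f → (∃ M : ℝ, ∀ y : Y, |f y| ≤ M) →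
    ∃ g : X → ℝ, IsBaireOne g ∧ (∃ M : ℝ, ∀ x : X, |g x| ≤ M) ∧ ∀ y : Y, g y = f y

/-! Extend a bounded Baire one `f` with `|f| ≤ M` to some Baire one `g`, then clamp `g` to
`[-|M|, |M|]` (`M` itself may be negative when `Y` is empty). Clamping is continuous, so it
preserves the Baire one property, and it fixes the values of `f` on `Y`. -/

theorem Continuous.comp_isBaireOne {X Y Z : Type*} [TopologicalSpace X] [TopologicalSpace Y]
    [TopologicalSpace Z] {g : Y → Z} (hg : Continuous g) {f : X → Y} (hf : IsBaireOne f) :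
    IsBaireOne (g ∘ f) := by
  obtain ⟨F, hFc, hFf⟩ := hf
  exact ⟨fun n => g ∘ F n, fun n => hg.comp (hFc n), fun x => (hg.tendsto (f x)).comp (hFf x)⟩

theorem abs_projIcc_neg_le {M : ℝ} (h : -M ≤ M) (t : ℝ) :
    |(Set.projIcc (-M) M h t : ℝ)| ≤ M :=
  abs_le.2 (Set.projIcc (-M) M h t).2

theorem b1StarEmbedded_of_b1Embedded {X : Type*} [TopologicalSpace X] (Y : Set X)
    (hY : B1Embedded Y) : B1StarEmbedded Y := by
  intro f hf ⟨M, hfM⟩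
  obtain ⟨g, hg, hgf⟩ := hY f hf
  have hM : -|M| ≤ |M| := neg_le_self (abs_nonneg M)
  let clamp : ℝ → ℝ := fun t => Set.projIcc (-|M|) |M| hM t
  have hclamp : Continuous clamp := continuous_subtype_val.comp continuous_projIcc
  refine ⟨clamp ∘ g, hclamp.comp_isBaireOne hg, ⟨|M|, fun x => abs_projIcc_neg_le hM (g x)⟩,
    fun y => ?_⟩
  have hfy : f y ∈ Set.Icc (-|M|) |M| := abs_le.1 ((hfM y).trans (le_abs_self M))
  simp only [Function.comp_apply, clamp, hgf y, Set.projIcc_of_mem hM hfy]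
end
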